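/- Let A be a unital associative ring and f ∈ A a regular element (f·a = 0 implies a = 0, and a·f = 0 implies a = 0) such that ad(f) is locally nilpotent on A. Then S = {f^n : n ∈ ℕ} is a multiplicative set of regular elements of A satisfying the Ore condition: for every u ∈ A and s ∈ S there exist t ∈ S and v ∈ A with u·t = s·v. Consequently the Ore localization S⁻¹A exists, and the canonical ring homomorphism A → S⁻¹A is injective. -/

import Mathlib

open OreLocalization

/-!
Write `ad x = f * x - x * f`. From `u * f = f * u - ad u` one gets by induction on `N` that
`ad^N u = 0` forces `u * f ^ N ∈ f * A`; iterating over the powers of `f`, every `u * f ^ m` with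
`m` large enough lies in `f ^ n * A`, which is the Ore condition for `S = {f ^ n}`; the mirror
argument gives the opposite condition `f ^ m * u ∈ A * f ^ n`, which is the one Mathlib's `OreSet`
asks for. Regularity of `f` passes to its powers, which makes `S` right cancellable, so `S` is an
Ore set and `A → S⁻¹A` is injective.
-/

section LocallyNilpotentAd

variable {A : Type*} [Ring A] {f : A}

lemma exists_mul_pow_eq_mul_of_iterate_ad_eq_zero (N : ℕ) :
    ∀ u : A, (fun x => f * x - x * f)^[N] u = 0 → ∃ v, u * f ^ N = f * v := by
  induction N with
  | zero => exact fun u hu => ⟨0, by simp_all⟩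
  | succ N ih =>
    intro u hu
    obtain ⟨w, hw⟩ := ih _ hu
    refine ⟨u * f ^ N - w, ?_⟩
    calc u * f ^ (N + 1) = (f * u - (f * u - u * f)) * f ^ N := by
          rw [sub_sub_cancel, pow_succ', mul_assoc]
      _ = f * (u * f ^ N - w) := by rw [sub_mul, mul_assoc, hw, ← mul_sub]

lemma exists_pow_mul_eq_mul_of_iterate_ad_eq_zero (N : ℕ) :
    ∀ u : A, (fun x => f * x - x * f)^[N] u = 0 → ∃ v, f ^ N * u = v * f := by
  induction N with
  | zero => exact fun u hu => ⟨0, by simp_all⟩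
  | succ N ih =>
    intro u hu
    obtain ⟨w, hw⟩ := ih _ hu
    refine ⟨f ^ N * u + w, ?_⟩
    calc f ^ (N + 1) * u = f ^ N * (u * f + (f * u - u * f)) := by
          rw [add_sub_cancel, pow_succ, mul_assoc]
      _ = (f ^ N * u + w) * f := by rw [mul_add, ← mul_assoc, hw, ← add_mul]

lemma exists_mul_pow_eq_pow_mul (hnil : ∀ a : A, ∃ N : ℕ, (fun x => f * x - x * f)^[N] a = 0)
    (n : ℕ) (u : A) : ∃ m : ℕ, ∃ v, u * f ^ m = f ^ n * v := by
  induction n with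
  | zero => exact ⟨0, u, by simp⟩
  | succ n ih =>
    obtain ⟨m, v, hv⟩ := ih
    obtain ⟨N, hN⟩ := hnil v
    obtain ⟨w, hw⟩ := exists_mul_pow_eq_mul_of_iterate_ad_eq_zero N v hN
    refine ⟨m + N, w, ?_⟩
    rw [pow_add, ← mul_assoc, hv, mul_assoc, hw, ← mul_assoc, pow_succ]

lemma exists_pow_mul_eq_mul_pow (hnil : ∀ a : A, ∃ N : ℕ, (fun x => f * x - x * f)^[N] a = 0)
    (n : ℕ) (u : A) : ∃ m : ℕ, ∃ v, f ^ m * u = v * f ^ n := by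
  induction n with
  | zero => exact ⟨0, u, by simp⟩
  | succ n ih =>
    obtain ⟨m, v, hv⟩ := ih
    obtain ⟨N, hN⟩ := hnil v
    obtain ⟨w, hw⟩ := exists_pow_mul_eq_mul_of_iterate_ad_eq_zero N v hN
    refine ⟨N + m, w, ?_⟩
    rw [pow_add, mul_assoc, hv, ← mul_assoc, hw, mul_assoc, pow_succ']

end LocallyNilpotentAd

lemma OreLocalization.nonempty_oreSet_of_le_nonZeroDivisorsRight {R : Type*} [Ring R]
    {S : Submonoid R} (hS : S ≤ nonZeroDivisorsRight R)
    (hore : ∀ (r : R) (s : S), ∃ (r' : R) (s' : S), s' * r = r' * s) : Nonempty (OreSet S) := by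
  refine nonempty_oreSet_iff.mpr ⟨fun r₁ r₂ s h => ⟨1, ?_⟩, hore⟩
  have : r₁ - r₂ = 0 := hS s.2 _ (by rw [sub_mul, h, sub_self])
  rw [sub_eq_zero.mp this]

theorem stmt_3 (A : Type*) [Ring A] (f : A)
    (hreg : ∀ a : A, (f * a = 0 → a = 0) ∧ (a * f = 0 → a = 0))
    (hnil : ∀ a : A, ∃ N : ℕ, (fun x => f * x - x * f)^[N] a = 0) :
    (∀ s ∈ Submonoid.powers f, ∀ a : A, (s * a = 0 → a = 0) ∧ (a * s = 0 → a = 0)) ∧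
    (∀ u : A, ∀ s ∈ Submonoid.powers f,
      ∃ t ∈ Submonoid.powers f, ∃ v : A, u * t = s * v) ∧
    (∃ inst : OreSet (Submonoid.powers f),
      letI := inst
      Function.Injective
        (OreLocalization.numeratorRingHom : A →+* OreLocalization (Submonoid.powers f) A)) := by
  have hS : Submonoid.powers f ≤ nonZeroDivisors A :=
    Submonoid.powers_le.mpr ⟨fun a => (hreg a).1, fun a => (hreg a).2⟩
  refine ⟨fun s hs a => ⟨(hS hs).1 a, (hS hs).2 a⟩, ?_, ?_⟩
  · rintro u s ⟨n, rfl⟩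
    obtain ⟨m, v, hv⟩ := exists_mul_pow_eq_pow_mul hnil n u
    exact ⟨f ^ m, ⟨m, rfl⟩, v, hv⟩
  · obtain ⟨inst⟩ := nonempty_oreSet_of_le_nonZeroDivisorsRight (hS.trans inf_le_right) <| by
      rintro r ⟨s, n, rfl⟩
      obtain ⟨m, v, hv⟩ := exists_pow_mul_eq_mul_pow hnil n r
      exact ⟨v, ⟨f ^ m, m, rfl⟩, hv⟩
    exact ⟨inst, numeratorHom_inj (hS.trans inf_le_left)⟩
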